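/- Assume the setting of the sum-of-squares construction: h : ℤⁿ → ℝ finitely supported with mask τ(ω) = Σ_k h(k) e^{−ik·ω}, τ(0) = λ^{n/2}, trigonometric polynomials g_1, …, g_N with 1 − λ^{−n} Σ_{γ∈Γ} |τ(ω/λ + γ)|² = Σ_{l=1}^{N} |g_l(ω)|² for all ω, polyphase components τ_ν(ω) = Σ_k h(λk − ν) e^{−ik·ω} for ν ∈ Λ, and wavelet masks q_{1,l}(ω) = τ(ω) g_l(λω) and q_{2,ν}(ω) = e^{iν·ω} − τ(ω)·conj(τ_ν(λω)). Let a ≥ 1 and b ≥ 1 be integers such that τ has a zero of order at least a at every γ ∈ Γ∖{0} and τ − λ^{n/2} has a zero of order at least b at 0. Then: (i) for each 1 ≤ l ≤ N and each nonnegative integer m, if g_l has a zero of order exactly m at 0, then q_{1,l} has a zero of order exactly m at 0; and (ii) each q_{2,ν}, ν ∈ Λ, has a zero of order at least min{a, b} at 0. -/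

import Mathlib

open Complex Real Function ComplexConjugate BigOperators

noncomputable section

/-- The dot product of `k ∈ ℤⁿ` with `ω ∈ ℝⁿ`. -/
def zdot {n : ℕ} (k : Fin n → ℤ) (ω : Fin n → ℝ) : ℝ := ∑ i, (k i : ℝ) * ω i

/-- `Γ = {2πν/λ : ν ∈ {0,1,…,λ-1}ⁿ}`. -/
def GammaSet (n lam : ℕ) : Set (Fin n → ℝ) :=
  Set.range (fun ν : Fin n → Fin lam => fun i => 2 * π * (ν i : ℝ) / (lam : ℝ))

/-- A trigonometric polynomial on `ℝⁿ`. -/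
def IsTrigPoly {n : ℕ} (f : (Fin n → ℝ) → ℂ) : Prop :=
  ∃ c : (Fin n → ℤ) → ℂ, (Function.support c).Finite ∧
    ∀ ω, f ω = ∑ᶠ k : Fin n → ℤ, c k * Complex.exp (-Complex.I * ((zdot k ω : ℝ) : ℂ))

/-- The mask `τ(ω) = Σ_{k∈ℤⁿ} h(k) e^{-ik·ω}` of a real filter `h`. -/
def mask (n : ℕ) (h : (Fin n → ℤ) → ℝ) (ω : Fin n → ℝ) : ℂ :=
  ∑ᶠ k : Fin n → ℤ, (h k : ℂ) * Complex.exp (-Complex.I * ((zdot k ω : ℝ) : ℂ))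

/-- The polyphase component `τ_ν(ω) = Σ_{k∈ℤⁿ} h(λk - ν) e^{-ik·ω}`. -/
def polyphase (n lam : ℕ) (h : (Fin n → ℤ) → ℝ) (ν : Fin n → ℤ) (ω : Fin n → ℝ) : ℂ :=
  ∑ᶠ k : Fin n → ℤ, (h (fun i => (lam : ℤ) * k i - ν i) : ℂ) *
    Complex.exp (-Complex.I * ((zdot k ω : ℝ) : ℂ))

/-- `q` has a zero of order at least `m` at `x`: all partial derivatives of total
order `< m` vanish at `x`. -/
def HasZeroOfOrderAtLeast {n : ℕ} (q : (Fin n → ℝ) → ℂ) (m : ℕ) (x : Fin n → ℝ) : Prop :=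
  ∀ j, j < m → iteratedFDeriv ℝ j q x = 0

/-- `q` has a zero of order exactly `m` at `x`. -/
def HasZeroOfOrderExactly {n : ℕ} (q : (Fin n → ℝ) → ℂ) (m : ℕ) (x : Fin n → ℝ) : Prop :=
  HasZeroOfOrderAtLeast q m x ∧ iteratedFDeriv ℝ m q x ≠ 0

local notation "S∞" => ((⊤ : ℕ∞) : WithTop ℕ∞)


section OrderLemmas
variable {E : Type} [NormedAddCommGroup E] [NormedSpace ℝ E]

lemma ord_fderiv {F : Type} [NormedAddCommGroup F] [NormedSpace ℝ F]
    {f : E → F} {x : E} {p : ℕ} (hord : ∀ i, i < p → iteratedFDeriv ℝ i f x = 0) :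
    ∀ i, i + 1 < p → iteratedFDeriv ℝ i (fderiv ℝ f) x = 0 := by
  intro i hi
  have h2 := hord (i + 1) hi
  rw [iteratedFDeriv_succ_eq_comp_right] at h2
  have h3 : (continuousMultilinearCurryRightEquiv' ℝ i E F).symm
      (iteratedFDeriv ℝ i (fun y => fderiv ℝ f y) x) = 0 := h2
  have h4 := congrArg (continuousMultilinearCurryRightEquiv' ℝ i E F) h3
  simp only [LinearIsometryEquiv.apply_symm_apply, map_zero] at h4
  exact h4

lemma contDiff_bilin {F1 F2 F3 : Type} [NormedAddCommGroup F1] [NormedSpace ℝ F1]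
    [NormedAddCommGroup F2] [NormedSpace ℝ F2] [NormedAddCommGroup F3] [NormedSpace ℝ F3]
    (B : F1 →L[ℝ] F2 →L[ℝ] F3) {f : E → F1} {g : E → F2}
    (hf : ContDiff ℝ S∞ f) (hg : ContDiff ℝ S∞ g) :
    ContDiff ℝ S∞ (fun y => B (f y) (g y)) :=
  B.isBoundedBilinearMap.contDiff.comp (hf.prodMk hg)

lemma bilin_order (j : ℕ) :
    ∀ {F1 F2 F3 : Type} [NormedAddCommGroup F1] [NormedSpace ℝ F1]
      [NormedAddCommGroup F2] [NormedSpace ℝ F2] [NormedAddCommGroup F3] [NormedSpace ℝ F3]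
      (B : F1 →L[ℝ] F2 →L[ℝ] F3) (f : E → F1) (g : E → F2) (x : E) (p q : ℕ),
      ContDiff ℝ S∞ f → ContDiff ℝ S∞ g →
      (∀ i, i < p → iteratedFDeriv ℝ i f x = 0) →
      (∀ i, i < q → iteratedFDeriv ℝ i g x = 0) →
      j < p + q → iteratedFDeriv ℝ j (fun y => B (f y) (g y)) x = 0 := by
  induction j with
  | zero =>
    intro F1 F2 F3 _ _ _ _ _ _ B f g x p q hf hg hfo hgo hj
    have hBz : B (f x) (g x) = 0 := by
      by_cases hp : 0 < p
      · have hfx : f x = 0 := by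
          simpa using congrArg (fun T => T (fun _ => (0 : E))) (hfo 0 hp)
        simp [hfx]
      · have hq : 0 < q := by omega
        have hgx : g x = 0 := by
          simpa using congrArg (fun T => T (fun _ => (0 : E))) (hgo 0 hq)
        simp [hgx]
    ext m
    simp [iteratedFDeriv_zero_apply, hBz]
  | succ j IH =>
    intro F1 F2 F3 _ _ _ _ _ _ B f g x p q hf hg hfo hgo hj
    have hdf : Differentiable ℝ f := hf.differentiable (by simp)
    have hdg : Differentiable ℝ g := hg.differentiable (by simp)
    have hf' : ContDiff ℝ S∞ (fderiv ℝ f) := (contDiff_infty_iff_fderiv.mp hf).2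
    have hg' : ContDiff ℝ S∞ (fderiv ℝ g) := (contDiff_infty_iff_fderiv.mp hg).2
    have hfd : (fderiv ℝ fun y => B (f y) (g y)) =
        fun y => (B.precompR E) (f y) (fderiv ℝ g y) + (B.precompL E) (fderiv ℝ f y) (g y) :=
      funext fun y => B.fderiv_of_bilinear (hdf y) (hdg y)
    rw [iteratedFDeriv_succ_eq_comp_right]
    have h1 : iteratedFDeriv ℝ j
        (fun y => (B.precompR E) (f y) (fderiv ℝ g y)) x = 0 :=
      IH (B.precompR E) f (fderiv ℝ g) x p (q - 1) hf hg'
        hfo (fun i hi => ord_fderiv hgo i (by omega)) (by omega)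
    have h2 : iteratedFDeriv ℝ j
        (fun y => (B.precompL E) (fderiv ℝ f y) (g y)) x = 0 :=
      IH (B.precompL E) (fderiv ℝ f) g x (p - 1) q hf' hg
        (fun i hi => ord_fderiv hfo i (by omega)) hgo (by omega)
    have hadd : iteratedFDeriv ℝ j (fderiv ℝ fun y => B (f y) (g y)) x = 0 := by
      rw [hfd, iteratedFDeriv_add_apply'
        (contDiff_infty.mp (contDiff_bilin (B.precompR E) hf hg') j).contDiffAt
        (contDiff_infty.mp (contDiff_bilin (B.precompL E) hf' hg) j).contDiffAt, h1, h2, add_zero]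
    simp only [Function.comp_apply]
    rw [show (iteratedFDeriv ℝ j (fun y => fderiv ℝ (fun z => B (f z) (g z)) y) x)
        = iteratedFDeriv ℝ j (fderiv ℝ fun y => B (f y) (g y)) x from rfl, hadd]
    exact (continuousMultilinearCurryRightEquiv' ℝ j E F3).symm.map_zero

lemma mul_order {f g : E → ℂ} {x : E} {p q : ℕ} (hf : ContDiff ℝ S∞ f) (hg : ContDiff ℝ S∞ g)
    (hfo : ∀ i, i < p → iteratedFDeriv ℝ i f x = 0)
    (hgo : ∀ i, i < q → iteratedFDeriv ℝ i g x = 0) :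
    ∀ j, j < p + q → iteratedFDeriv ℝ j (fun y => f y * g y) x = 0 := by
  intro j hj
  exact bilin_order j (ContinuousLinearMap.mul ℝ ℂ) f g x p q hf hg hfo hgo hj

end OrderLemmas


section Translation
variable {E : Type} [NormedAddCommGroup E] [NormedSpace ℝ E]

lemma iteratedFDeriv_comp_add (j : ℕ) :
    ∀ {F : Type} [NormedAddCommGroup F] [NormedSpace ℝ F]
      (f : E → F), ContDiff ℝ S∞ f → ∀ (c x : E),
      iteratedFDeriv ℝ j (fun y => f (y + c)) x = iteratedFDeriv ℝ j f (x + c) := by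
  induction j with
  | zero => intro F _ _ f hf c x; ext m; simp
  | succ j IH =>
    intro F _ _ f hf c x
    have hf' : ContDiff ℝ S∞ (fderiv ℝ f) := (contDiff_infty_iff_fderiv.mp hf).2
    have hfd : (fderiv ℝ fun y : E => f (y + c)) = fun y => fderiv ℝ f (y + c) := by
      funext y
      have h1 : HasFDerivAt (fun y : E => f (y + c))
          ((fderiv ℝ f (y + c)).comp (ContinuousLinearMap.id ℝ E)) y :=
        (hf.differentiable (by simp) (y + c)).hasFDerivAt.comp y ((hasFDerivAt_id y).add_const c)
      simpa using h1.fderiv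
    rw [iteratedFDeriv_succ_eq_comp_right, iteratedFDeriv_succ_eq_comp_right]
    simp only [Function.comp_apply]
    apply congrArg
    rw [show (fun y => fderiv ℝ (fun z : E => f (z + c)) y) = fun y => fderiv ℝ f (y + c)
      from hfd]
    exact IH (fderiv ℝ f) hf' c x

end Translation

def ee (t : ℝ) : ℂ := Complex.exp (-Complex.I * (t : ℂ))

lemma ee_add (s t : ℝ) : ee (s + t) = ee s * ee t := by
  rw [ee, ee, ee, Complex.ofReal_add, mul_add, Complex.exp_add]

lemma ee_zero : ee 0 = 1 := by simp [ee]

lemma conj_ee (t : ℝ) : conj (ee t) = Complex.exp (Complex.I * (t : ℂ)) := by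
  rw [ee, ← Complex.exp_conj]
  congr 1
  simp

lemma exp_mul_ee (t : ℝ) : Complex.exp (Complex.I * (t : ℂ)) * ee t = 1 := by
  rw [ee, ← Complex.exp_add]
  ring_nf
  exact Complex.exp_zero

section SM
variable {n : ℕ}

lemma contDiff_zdot (k : Fin n → ℤ) : ContDiff ℝ S∞ (zdot k) := by
  unfold zdot
  exact ContDiff.sum fun i _ => contDiff_const.mul (contDiff_apply ℝ ℝ i)

lemma contDiff_ee_zdot (k : Fin n → ℤ) : ContDiff ℝ S∞ (fun w : Fin n → ℝ => ee (zdot k w)) := by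
  apply (Complex.contDiff_exp (𝕜 := ℝ)).comp
  exact contDiff_const.mul (Complex.ofRealCLM.contDiff.comp (contDiff_zdot k))

lemma zdot_add_right (k : Fin n → ℤ) (w v : Fin n → ℝ) :
    zdot k (w + v) = zdot k w + zdot k v := by
  simp [zdot, mul_add, Finset.sum_add_distrib]

lemma zdot_add_left (k l : Fin n → ℤ) (w : Fin n → ℝ) :
    zdot (fun i => k i + l i) w = zdot k w + zdot l w := by
  simp only [zdot, Int.cast_add, add_mul, Finset.sum_add_distrib]

lemma char_sum {lam : ℕ} (hlam : 2 ≤ lam) (m : ℤ) :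
    ∑ c : Fin lam, ee ((m : ℝ) * (2 * π * (c : ℝ) / lam)) =
      if (lam : ℤ) ∣ m then (lam : ℂ) else 0 := by
  have hlam0 : (lam : ℝ) ≠ 0 := by positivity
  have hlamC : (lam : ℂ) ≠ 0 := by exact_mod_cast Nat.cast_ne_zero.mpr (by omega)
  set z : ℂ := ee ((m : ℝ) * (2 * π / lam)) with hz
  have hterm : ∀ c : Fin lam, ee ((m : ℝ) * (2 * π * (c : ℝ) / lam)) = z ^ (c : ℕ) := by
    intro c
    rw [hz, ee, ee, ← Complex.exp_nat_mul]
    congr 1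
    push_cast
    ring
  have hsum : ∑ c : Fin lam, ee ((m : ℝ) * (2 * π * (c : ℝ) / lam)) =
      ∑ i ∈ Finset.range lam, z ^ i := by
    rw [Finset.sum_congr rfl fun c _ => hterm c]
    exact Fin.sum_univ_eq_sum_range (fun i => z ^ i) lam
  have hzpow : z ^ lam = 1 := by
    rw [hz, ee, ← Complex.exp_nat_mul]
    rw [show (lam : ℂ) * (-Complex.I * (((m : ℝ) * (2 * π / lam) : ℝ) : ℂ)) =
        (-m : ℤ) * (2 * π * Complex.I) by push_cast; field_simp]
    exact Complex.exp_int_mul_two_pi_mul_I (-m)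
  by_cases hdvd : (lam : ℤ) ∣ m
  · obtain ⟨t, ht⟩ := hdvd
    have hz1 : z = 1 := by
      rw [hz, ee]
      rw [show -Complex.I * (((m : ℝ) * (2 * π / lam) : ℝ) : ℂ) =
          (-t : ℤ) * (2 * π * Complex.I) by push_cast [ht]; field_simp]
      exact Complex.exp_int_mul_two_pi_mul_I (-t)
    rw [hsum, if_pos ⟨t, ht⟩, hz1]
    simp
  · have hz1 : z ≠ 1 := by
      intro hz1
      rw [hz, ee, Complex.exp_eq_one_iff] at hz1
      obtain ⟨k, hk⟩ := hz1
      apply hdvd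
      have hC : (m : ℂ) = (-k) * lam := by
        have hI : (Complex.I : ℂ) ≠ 0 := Complex.I_ne_zero
        have hpi : (π : ℂ) ≠ 0 := Complex.ofReal_ne_zero.mpr Real.pi_ne_zero
        push_cast at hk
        field_simp at hk
        have h2 : (2 * (π : ℂ) * Complex.I) * ((m : ℂ) + k * lam) = 0 := by
          linear_combination (-(2 * (π : ℂ) * Complex.I)) * hk
        have h3 : ((m : ℂ) + k * lam) = 0 := by
          rcases mul_eq_zero.mp h2 with h | h
          · exact absurd h (by simp [hpi, Real.pi_ne_zero])
          · exact h
        linear_combination h3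
      have hZ : (m : ℤ) = -k * lam := by exact_mod_cast hC
      exact ⟨-k, by linarith⟩
    rw [hsum, geom_sum_eq hz1, hzpow, if_neg hdvd]
    simp

end SM


section KI

variable {n lam : ℕ}

lemma mask_finsum (h : (Fin n → ℤ) → ℝ) (w : Fin n → ℝ) :
    mask n h w = ∑ᶠ k : Fin n → ℤ, (h k : ℂ) * ee (zdot k w) := rfl

lemma mask_eq_sum (h : (Fin n → ℤ) → ℝ) (hfin : (Function.support h).Finite) (w : Fin n → ℝ) :
    mask n h w = ∑ k ∈ hfin.toFinset, (h k : ℂ) * ee (zdot k w) := by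
  rw [mask_finsum]
  apply finsum_eq_sum_of_support_subset
  intro k hk
  simp only [Function.mem_support] at hk
  have : h k ≠ 0 := by
    intro h0
    apply hk
    simp [h0]
  simpa [Set.Finite.coe_toFinset] using this

lemma contDiff_trigsum (c : (Fin n → ℤ) → ℂ) (s : Finset (Fin n → ℤ)) :
    ContDiff ℝ S∞ (fun w : Fin n → ℝ => ∑ k ∈ s, c k * ee (zdot k w)) :=
  ContDiff.sum fun k _ => contDiff_const.mul (contDiff_ee_zdot k)

lemma contDiff_mask (h : (Fin n → ℤ) → ℝ) (hfin : (Function.support h).Finite) :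
    ContDiff ℝ S∞ (mask n h) := by
  have : mask n h = fun w => ∑ k ∈ hfin.toFinset, ((h k : ℂ)) * ee (zdot k w) :=
    funext fun w => mask_eq_sum h hfin w
  rw [this]
  exact contDiff_trigsum _ _

lemma contDiff_trigpoly {f : (Fin n → ℝ) → ℂ} (hf : IsTrigPoly f) : ContDiff ℝ S∞ f := by
  obtain ⟨c, cfin, hc⟩ := hf
  have : f = fun w => ∑ k ∈ cfin.toFinset, c k * ee (zdot k w) := by
    funext w
    rw [hc w]
    apply finsum_eq_sum_of_support_subset
    intro k hk
    have : c k ≠ 0 := fun h0 => by simp [h0] at hk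
    simpa [Set.Finite.coe_toFinset] using this
  rw [this]
  exact contDiff_trigsum _ _

/-- The key polyphase identity. -/
lemma key_identity (hlam : 2 ≤ lam) (h : (Fin n → ℤ) → ℝ)
    (hfin : (Function.support h).Finite) (ν' : Fin n → ℤ) (w : Fin n → ℝ) :
    ((lam : ℂ)) ^ n * (Complex.exp (Complex.I * ((zdot ν' w : ℝ) : ℂ)) *
        polyphase n lam h ν' (fun i => (lam : ℝ) * w i)) =
      ∑ γ : Fin n → Fin lam, ee (zdot ν' (fun i => 2 * π * (γ i : ℝ) / lam)) *
        mask n h (w + fun i => 2 * π * (γ i : ℝ) / lam) := by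
  classical
  have hlamZ : (lam : ℤ) ≠ 0 := by omega
  set φ : (Fin n → ℤ) → (Fin n → ℤ) := fun k => fun i => (lam : ℤ) * k i - ν' i with hφ
  have hφinj : Function.Injective φ := by
    intro k k' hkk
    funext i
    have := congrFun hkk i
    simp only [hφ] at this
    have : (lam : ℤ) * k i = (lam : ℤ) * k' i := by omega
    exact mul_left_cancel₀ hlamZ this
  have hpre : (φ ⁻¹' (Function.support h)).Finite := hfin.preimage hφinj.injOn
  set s : Finset (Fin n → ℤ) := hfin.toFinset with hs
  set t : Finset (Fin n → ℤ) := hpre.toFinset with hts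
  set P : (Fin n → ℤ) → Prop := fun j => ∀ i, (lam : ℤ) ∣ (ν' i + j i) with hP
  set ψ : (Fin n → ℤ) → (Fin n → ℤ) := fun j => fun i => (ν' i + j i) / (lam : ℤ) with hψ
  set Γf : (Fin n → Fin lam) → (Fin n → ℝ) := fun γ => fun i => 2 * π * (γ i : ℝ) / lam
    with hΓf
  -- polyphase as finite sum
  have hpoly : polyphase n lam h ν' (fun i => (lam : ℝ) * w i) =
      ∑ k ∈ t, (h (φ k) : ℂ) * ee (zdot k (fun i => (lam : ℝ) * w i)) := by
    show (∑ᶠ k : Fin n → ℤ, (h (φ k) : ℂ) * ee (zdot k (fun i => (lam : ℝ) * w i))) = _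
    apply finsum_eq_sum_of_support_subset
    intro k hk
    have : h (φ k) ≠ 0 := by
      intro h0
      apply hk
      simp [h0]
    simpa [hts, Set.Finite.coe_toFinset, Set.mem_preimage, Function.mem_support] using this
  -- RHS transformation
  have hRHS : (∑ γ : Fin n → Fin lam, ee (zdot ν' (Γf γ)) * mask n h (w + Γf γ)) =
      ∑ j ∈ s, (h j : ℂ) * ee (zdot j w) *
        (if P j then ((lam : ℂ)) ^ n else 0) := by
    have step1 : ∀ γ : Fin n → Fin lam, ee (zdot ν' (Γf γ)) * mask n h (w + Γf γ) =
        ∑ j ∈ s, (h j : ℂ) * ee (zdot j w) * ee (zdot (fun i => ν' i + j i) (Γf γ)) := by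
      intro γ
      rw [mask_eq_sum h hfin, Finset.mul_sum]
      apply Finset.sum_congr rfl
      intro j _
      rw [zdot_add_right, ee_add, zdot_add_left, ee_add]
      ring
    rw [Finset.sum_congr rfl fun γ _ => step1 γ, Finset.sum_comm]
    apply Finset.sum_congr rfl
    intro j _
    rw [← Finset.mul_sum]
    congr 1
    -- inner character sum
    have hsplit : ∀ γ : Fin n → Fin lam, ee (zdot (fun i => ν' i + j i) (Γf γ)) =
        ∏ i, ee (((ν' i + j i : ℤ) : ℝ) * (2 * π * ((γ i : ℕ) : ℝ) / lam)) := by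
      intro γ
      rw [show zdot (fun i => ν' i + j i) (Γf γ) =
          ∑ i, ((ν' i + j i : ℤ) : ℝ) * (2 * π * ((γ i : ℕ) : ℝ) / lam) from rfl]
      rw [ee, Complex.ofReal_sum, Finset.mul_sum, Complex.exp_sum]
      rfl
    rw [Finset.sum_congr rfl fun γ _ => hsplit γ]
    rw [← Fintype.piFinset_univ]
    have hpus := Finset.prod_univ_sum (fun _ : Fin n => (Finset.univ : Finset (Fin lam)))
      (fun i c => ee (((ν' i + j i : ℤ) : ℝ) * (2 * π * ((c : ℕ) : ℝ) / lam)))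
    rw [← hpus]
    have hchar : ∀ i : Fin n, (∑ c : Fin lam,
        ee (((ν' i + j i : ℤ) : ℝ) * (2 * π * ((c : ℕ) : ℝ) / lam))) =
        if (lam : ℤ) ∣ (ν' i + j i) then (lam : ℂ) else 0 := fun i => char_sum hlam _
    rw [Finset.prod_congr rfl fun i _ => hchar i]
    by_cases hPj : P j
    · rw [if_pos hPj]
      rw [Finset.prod_congr rfl fun i _ => if_pos (hPj i)]
      simp [Finset.prod_const, Finset.card_univ]
    · rw [if_neg hPj]
      obtain ⟨i, hi⟩ := not_forall.mp hPj
      exact Finset.prod_eq_zero (Finset.mem_univ i) (if_neg hi)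
  rw [hRHS, hpoly, Finset.mul_sum, Finset.mul_sum]
  -- reindex
  rw [show (∑ j ∈ s, (h j : ℂ) * ee (zdot j w) * (if P j then ((lam : ℂ)) ^ n else 0)) =
      ∑ j ∈ s.filter P, ((lam : ℂ)) ^ n * ((h j : ℂ) * ee (zdot j w)) by
    rw [Finset.sum_filter]
    apply Finset.sum_congr rfl
    intro j _
    split_ifs with hPj
    · ring
    · simp]
  symm
  apply Finset.sum_nbij' (i := ψ) (j := φ)
  · -- hi : maps filter into t
    intro j hj
    obtain ⟨hjs, hPj⟩ := Finset.mem_filter.mp hj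
    have hφψ : φ (ψ j) = j := by
      funext i
      simp only [hφ, hψ]
      have := Int.mul_ediv_cancel' (hPj i)
      omega
    simp only [hts, Set.Finite.mem_toFinset, Set.mem_preimage, Function.mem_support]
    rw [hφψ]
    simpa [hs, Set.Finite.mem_toFinset, Function.mem_support] using hjs
  · -- hj : φ maps t into filter
    intro k hk
    have hsup : h (φ k) ≠ 0 := by
      simpa [hts, Set.Finite.mem_toFinset, Set.mem_preimage, Function.mem_support] using hk
    refine Finset.mem_filter.mpr ⟨by simpa [hs, Set.Finite.mem_toFinset,
      Function.mem_support] using hsup, ?_⟩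
    intro i
    exact ⟨k i, by simp [hφ]⟩
  · -- left inv
    intro j hj
    obtain ⟨_, hPj⟩ := Finset.mem_filter.mp hj
    funext i
    simp only [hφ, hψ]
    have := Int.mul_ediv_cancel' (hPj i)
    omega
  · -- right inv
    intro k _
    funext i
    simp only [hφ, hψ]
    rw [show ν' i + ((lam : ℤ) * k i - ν' i) = (lam : ℤ) * k i by ring]
    exact Int.mul_ediv_cancel_left _ hlamZ
  · -- terms agree
    intro j hj
    obtain ⟨_, hPj⟩ := Finset.mem_filter.mp hj
    have hzd : zdot (ψ j) (fun i => (lam : ℝ) * w i) = zdot ν' w + zdot j w := by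
      rw [← zdot_add_left]
      show (∑ i, ((ψ j i : ℤ) : ℝ) * ((lam : ℝ) * w i)) = ∑ i, ((ν' i + j i : ℤ) : ℝ) * w i
      apply Finset.sum_congr rfl
      intro i _
      have hdiv : (lam : ℤ) * (ψ j i) = ν' i + j i := Int.mul_ediv_cancel' (hPj i)
      rw [show ((ψ j i : ℤ) : ℝ) * ((lam : ℝ) * w i) = (((lam : ℤ) * ψ j i : ℤ) : ℝ) * w i by
        push_cast; ring, hdiv]
    have hφψ : φ (ψ j) = j := by
      funext i
      simp only [hφ, hψ]
      have := Int.mul_ediv_cancel' (hPj i)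
      omega
    rw [hφψ, hzd, ee_add]
    rw [show ((lam : ℂ)) ^ n * (Complex.exp (Complex.I * ((zdot ν' w : ℝ) : ℂ)) *
        ((h j : ℂ) * (ee (zdot ν' w) * ee (zdot j w)))) =
        ((lam : ℂ)) ^ n * ((h j : ℂ) * ee (zdot j w)) *
          (Complex.exp (Complex.I * ((zdot ν' w : ℝ) : ℂ)) * ee (zdot ν' w)) by ring,
      exp_mul_ee, mul_one]

end KI

section MoreHelpers
variable {E : Type} [NormedAddCommGroup E] [NormedSpace ℝ E]

lemma nat_le_Sinf (i : ℕ) : (i : WithTop ℕ∞) ≤ S∞ := by exact_mod_cast le_top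

lemma contDiff_conj {f : E → ℂ} (hf : ContDiff ℝ S∞ f) :
    ContDiff ℝ S∞ fun x => conj (f x) := by
  have : (fun x => conj (f x)) =
      (⇑((Complex.conjCLE : ℂ ≃L[ℝ] ℂ) : ℂ →L[ℝ] ℂ)) ∘ f := funext fun y => by simp
  rw [this]
  exact ((Complex.conjCLE : ℂ ≃L[ℝ] ℂ) : ℂ →L[ℝ] ℂ).contDiff.comp hf

lemma ord_conj {f : E → ℂ} {x : E} {m : ℕ} (hf : ContDiff ℝ S∞ f)
    (ho : ∀ i, i < m → iteratedFDeriv ℝ i f x = 0) :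
    ∀ i, i < m → iteratedFDeriv ℝ i (fun y => conj (f y)) x = 0 := by
  intro i hi
  have hcomp : (fun y => conj (f y)) =
      (⇑((Complex.conjCLE : ℂ ≃L[ℝ] ℂ) : ℂ →L[ℝ] ℂ)) ∘ f := funext fun y => by simp
  rw [hcomp, ContinuousLinearMap.iteratedFDeriv_comp_left _ hf.contDiffAt (nat_le_Sinf i), ho i hi]
  ext m0
  simp

lemma conj_expI (t : ℝ) : conj (Complex.exp (Complex.I * (t : ℂ))) = ee t := by
  rw [← Complex.exp_conj, ee]
  congr 1
  simp

end MoreHelpers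

section Main
variable {n : ℕ}

lemma contDiff_expI_zdot (k : Fin n → ℤ) :
    ContDiff ℝ S∞ (fun w : Fin n → ℝ => Complex.exp (Complex.I * ((zdot k w : ℝ) : ℂ))) := by
  apply (Complex.contDiff_exp (𝕜 := ℝ)).comp
  exact contDiff_const.mul (Complex.ofRealCLM.contDiff.comp (contDiff_zdot k))

end Main


/-- vanishing moments in the sos construction. Each `q_{1,l}` has a zero
at `0` of exactly the order of the zero of `g_l` at `0`, and each `q_{2,ν}` has a zero
of order at least `min{a,b}` at `0`. -/
theorem sos_vanishing_moments (n lam N : ℕ) (hn : 1 ≤ n) (hlam : 2 ≤ lam)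
    (h : (Fin n → ℤ) → ℝ) (hfin : (Function.support h).Finite)
    (hlow : mask n h 0 = (((lam : ℝ) ^ ((n : ℝ) / 2) : ℝ) : ℂ))
    (g : ℕ → (Fin n → ℝ) → ℂ) (hg : ∀ l < N, IsTrigPoly (g l))
    (hsos : ∀ ω : Fin n → ℝ,
      1 - ((lam : ℝ) ^ n)⁻¹ *
          ∑ γ : Fin n → Fin lam,
            ‖mask n h
              (fun i => ω i / (lam : ℝ) + 2 * π * (γ i : ℝ) / (lam : ℝ))‖ ^ 2
        = ∑ l ∈ Finset.range N, ‖g l ω‖ ^ 2)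
    (a b : ℕ) (ha : 1 ≤ a) (hb : 1 ≤ b)
    (hacc : ∀ γ ∈ GammaSet n lam, γ ≠ 0 → HasZeroOfOrderAtLeast (mask n h) a γ)
    (hflat : HasZeroOfOrderAtLeast
      (fun ω => mask n h ω - (((lam : ℝ) ^ ((n : ℝ) / 2) : ℝ) : ℂ)) b 0) :
    (∀ l < N, ∀ m : ℕ, HasZeroOfOrderExactly (g l) m 0 →
      HasZeroOfOrderExactly
        (fun ω => mask n h ω * g l (fun i => (lam : ℝ) * ω i)) m 0) ∧
    (∀ ν : Fin n → Fin lam,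
      HasZeroOfOrderAtLeast
        (fun ω => Complex.exp (Complex.I * ((zdot (fun i => (ν i : ℤ)) ω : ℝ) : ℂ))
          - mask n h ω * conj (polyphase n lam h (fun i => (ν i : ℤ)) (fun i => (lam : ℝ) * ω i)))
        (min a b) 0) := by
  classical
  haveI : NeZero lam := ⟨by omega⟩
  have hlamR : (0 : ℝ) < (lam : ℝ) := by positivity
  have hlamC : (lam : ℂ) ≠ 0 := Nat.cast_ne_zero.mpr (by omega)
  have hτ : ContDiff ℝ S∞ (mask n h) := contDiff_mask h hfin
  set c : ℂ := (((lam : ℝ) ^ ((n : ℝ) / 2) : ℝ) : ℂ) with hcdef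
  have hcR : (0 : ℝ) < (lam : ℝ) ^ ((n : ℝ) / 2) := Real.rpow_pos_of_pos hlamR _
  have hc0 : c ≠ 0 := Complex.ofReal_ne_zero.mpr (ne_of_gt hcR)
  have hcsq : c * c = ((lam : ℂ)) ^ n := by
    rw [hcdef, ← Complex.ofReal_mul, ← Real.rpow_add hlamR,
      show (n : ℝ) / 2 + (n : ℝ) / 2 = ((n : ℕ) : ℝ) by push_cast; ring,
      Real.rpow_natCast]
    push_cast
    ring
  have hr : ContDiff ℝ S∞ (fun w => mask n h w - c) := hτ.sub contDiff_const
  have hrord : ∀ i, i < b → iteratedFDeriv ℝ i (fun w => mask n h w - c) 0 = 0 := hflat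
  constructor
  · -- part (i)
    intro l hl m hm
    obtain ⟨hmord, hmne⟩ := hm
    have hgl : ContDiff ℝ S∞ (g l) := contDiff_trigpoly (hg l hl)
    set L : (Fin n → ℝ) →L[ℝ] (Fin n → ℝ) :=
      (lam : ℝ) • ContinuousLinearMap.id ℝ (Fin n → ℝ) with hL
    have hLapp : ∀ w : Fin n → ℝ, L w = fun i => (lam : ℝ) * w i := by
      intro w; funext i; simp [hL]
    have hGeq : (fun w : Fin n → ℝ => g l (fun i => (lam : ℝ) * w i)) = (g l) ∘ ⇑L := by
      funext w
      exact congrArg (g l) (hLapp w).symm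
    have hG : ContDiff ℝ S∞ (fun w : Fin n → ℝ => g l (fun i => (lam : ℝ) * w i)) := by
      rw [hGeq]; exact hgl.comp L.contDiff
    have hGit : ∀ (i : ℕ) (x : Fin n → ℝ),
        iteratedFDeriv ℝ i (fun w : Fin n → ℝ => g l (fun i => (lam : ℝ) * w i)) x
          = (iteratedFDeriv ℝ i (g l) (L x)).compContinuousLinearMap (fun _ => L) := by
      intro i x
      rw [hGeq]
      exact L.iteratedFDeriv_comp_right hgl x (nat_le_Sinf i)
    have hGord : ∀ i, i < m →
        iteratedFDeriv ℝ i (fun w : Fin n → ℝ => g l (fun i => (lam : ℝ) * w i)) 0 = 0 := by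
      intro i hi
      rw [hGit i 0, map_zero, hmord i hi]
      ext m0
      simp
    constructor
    · intro j hj
      exact mul_order (p := 0) (q := m) hτ hG (fun i hi => absurd hi (Nat.not_lt_zero i))
        hGord j (by omega)
    · have hsplit : (fun ω => mask n h ω * g l (fun i => (lam : ℝ) * ω i)) =
          fun w => c • (g l (fun i => (lam : ℝ) * w i)) +
            (mask n h w - c) * (g l (fun i => (lam : ℝ) * w i)) := by
        funext w
        rw [smul_eq_mul]
        ring
      rw [hsplit, iteratedFDeriv_add_apply' (contDiff_infty.mp (ContDiff.const_smul c hG) m).contDiffAt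
        (contDiff_infty.mp (hr.mul hG) m).contDiffAt]
      have h2 : iteratedFDeriv ℝ m
          (fun w => (mask n h w - c) * g l (fun i => (lam : ℝ) * w i)) 0 = 0 := by
        apply mul_order (p := 1) (q := m) hr hG ?_ hGord m (by omega)
        intro i hi
        interval_cases i
        ext m0
        simp [iteratedFDeriv_zero_apply, hlow, hcdef]
      rw [h2, add_zero, iteratedFDeriv_const_smul_apply' (contDiff_infty.mp hG m).contDiffAt]
      intro hcon
      rcases smul_eq_zero.mp hcon with hcc | hGm
      · exact hc0 hcc
      · rw [hGit m 0, map_zero] at hGm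
        apply hmne
        ext v
        have h5 : ((iteratedFDeriv ℝ m (g l) 0).compContinuousLinearMap (fun _ => L))
            (fun i => (lam : ℝ)⁻¹ • v i) = 0 := by rw [hGm]; rfl
        rw [ContinuousMultilinearMap.compContinuousLinearMap_apply] at h5
        have h6 : (fun i => L ((lam : ℝ)⁻¹ • v i)) = v := by
          funext i
          rw [hLapp]
          funext i2
          simp only [Pi.smul_apply, smul_eq_mul, ← mul_assoc,
            mul_inv_cancel₀ (ne_of_gt hlamR), one_mul]
        rw [h6] at h5
        rw [h5]
        rfl
  · -- part (ii)
    intro ν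
    set ν' : Fin n → ℤ := fun i => (ν i : ℤ) with hν'
    set Γf : (Fin n → Fin lam) → (Fin n → ℝ) :=
      fun γ => fun i => 2 * π * (γ i : ℝ) / lam with hΓf
    set u : ℂ := ((lam : ℂ) ^ n)⁻¹ with hudef
    have hu : u * (lam : ℂ) ^ n = 1 := inv_mul_cancel₀ (pow_ne_zero _ hlamC)
    have hconj : ∀ w, ((lam : ℂ)) ^ n *
        (ee (zdot ν' w) * conj (polyphase n lam h ν' (fun i => (lam : ℝ) * w i))) =
        ∑ γ : Fin n → Fin lam, Complex.exp (Complex.I * ((zdot ν' (Γf γ) : ℝ) : ℂ)) *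
          conj (mask n h (w + Γf γ)) := by
      intro w
      have hh := congrArg conj (key_identity hlam h hfin ν' w)
      simpa [map_mul, map_sum, map_pow, map_natCast, conj_expI, conj_ee] using hh
    set Q : (Fin n → ℝ) → ℂ := fun w => 1 - ∑ γ : Fin n → Fin lam,
      u * Complex.exp (Complex.I * ((zdot ν' (Γf γ) : ℝ) : ℂ)) *
        (mask n h w * conj (mask n h (w + Γf γ))) with hQ
    have hq2 : ∀ w, Complex.exp (Complex.I * ((zdot ν' w : ℝ) : ℂ)) -
        mask n h w * conj (polyphase n lam h ν' (fun i => (lam : ℝ) * w i)) =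
        Complex.exp (Complex.I * ((zdot ν' w : ℝ) : ℂ)) * Q w := by
      intro w
      have hE : Complex.exp (Complex.I * ((zdot ν' w : ℝ) : ℂ)) * ee (zdot ν' w) = 1 :=
        exp_mul_ee _
      simp only [hQ]
      have hsum2 : (∑ γ : Fin n → Fin lam,
          u * Complex.exp (Complex.I * ((zdot ν' (Γf γ) : ℝ) : ℂ)) *
            (mask n h w * conj (mask n h (w + Γf γ)))) =
          u * mask n h w * ∑ γ : Fin n → Fin lam,
            Complex.exp (Complex.I * ((zdot ν' (Γf γ) : ℝ) : ℂ)) *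
              conj (mask n h (w + Γf γ)) := by
        rw [Finset.mul_sum]
        exact Finset.sum_congr rfl fun γ _ => by ring
      rw [hsum2, ← hconj w]
      linear_combination (u * ((lam : ℂ)) ^ n * mask n h w *
          conj (polyphase n lam h ν' (fun i => (lam : ℝ) * w i))) * hE +
        (mask n h w * conj (polyphase n lam h ν' (fun i => (lam : ℝ) * w i))) * hu
    -- smoothness
    have hτγ : ∀ v : Fin n → ℝ, ContDiff ℝ S∞ (fun w => mask n h (w + v)) :=
      fun v => hτ.comp (contDiff_id.add contDiff_const)
    have hQs : ContDiff ℝ S∞ Q := by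
      rw [hQ]
      apply contDiff_const.sub
      exact ContDiff.sum fun γ _ => contDiff_const.mul (hτ.mul (contDiff_conj (hτγ (Γf γ))))
    -- order of Q
    have hQord : ∀ i, i < min a b → iteratedFDeriv ℝ i Q 0 = 0 := by
      set A : (Fin n → ℝ) → ℂ := fun w => 1 - u * (mask n h w * conj (mask n h w)) with hA
      set W : (Fin n → ℝ) → ℂ := fun w =>
        ∑ γ ∈ Finset.univ.erase (0 : Fin n → Fin lam),
          (-(u * Complex.exp (Complex.I * ((zdot ν' (Γf γ) : ℝ) : ℂ)))) •
            (mask n h w * conj (mask n h (w + Γf γ))) with hW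
    -- pointwise split
      have hΓ0 : Γf (0 : Fin n → Fin lam) = (0 : Fin n → ℝ) := by
        funext i
        simp [hΓf]
      have hQAW : Q = fun w => A w + W w := by
        funext w
        simp only [hQ, hA, hW]
        rw [← Finset.add_sum_erase Finset.univ _ (Finset.mem_univ (0 : Fin n → Fin lam)), hΓ0]
        have h0 : zdot ν' (0 : Fin n → ℝ) = 0 := by simp [zdot]
        rw [h0, add_zero]
        push_cast
        rw [mul_zero, Complex.exp_zero]
        simp only [smul_eq_mul]
        rw [show (∑ x ∈ Finset.univ.erase (0 : Fin n → Fin lam),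
            -(u * Complex.exp (Complex.I * ((zdot ν' (Γf x) : ℝ) : ℂ))) *
              (mask n h w * conj (mask n h (w + Γf x)))) =
            -∑ x ∈ Finset.univ.erase (0 : Fin n → Fin lam),
              u * Complex.exp (Complex.I * ((zdot ν' (Γf x) : ℝ) : ℂ)) *
                (mask n h w * conj (mask n h (w + Γf x))) by
          rw [← Finset.sum_neg_distrib]
          exact Finset.sum_congr rfl fun γ _ => by ring]
        ring
      have hAs : ContDiff ℝ S∞ A := by
        simp only [hA]
        exact contDiff_const.sub (contDiff_const.mul (hτ.mul (contDiff_conj hτ)))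
      have hWs : ContDiff ℝ S∞ W := by
        simp only [hW]
        exact ContDiff.sum fun γ _ =>
          ContDiff.const_smul _ (hτ.mul (contDiff_conj (hτγ (Γf γ))))
      intro i hi
      rw [hQAW, iteratedFDeriv_add_apply' (contDiff_infty.mp hAs i).contDiffAt (contDiff_infty.mp hWs i).contDiffAt]
      have hAz : iteratedFDeriv ℝ i A 0 = 0 := by
        have hucc : u * (c * c) = 1 := by rw [hcsq]; exact hu
        have hAform : A = fun w => (-(u * c)) • (mask n h w - c) +
            ((-(u * c)) • conj (mask n h w - c) +
              (-u) • ((mask n h w - c) * conj (mask n h w - c))) := by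
          funext w
          simp only [hA, smul_eq_mul]
          have hct : conj (mask n h w) = c + conj (mask n h w - c) := by
            rw [map_sub, Complex.conj_ofReal]
            ring
          rw [hct]
          linear_combination -hucc
        rw [hAform]
        have hb1 : i < b := by omega
        have t2s : ContDiff ℝ S∞ (fun w => conj (mask n h w - c)) := contDiff_conj hr
        have t3s : ContDiff ℝ S∞
            (fun w => (mask n h w - c) * conj (mask n h w - c)) := hr.mul t2s
        rw [iteratedFDeriv_add_apply' (contDiff_infty.mp (ContDiff.const_smul (-(u * c)) hr) i).contDiffAt
          (contDiff_infty.mp ((ContDiff.const_smul (-(u * c)) t2s).add (ContDiff.const_smul (-u) t3s)) i).contDiffAt,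
          iteratedFDeriv_add_apply' (contDiff_infty.mp (ContDiff.const_smul (-(u * c)) t2s) i).contDiffAt
          (contDiff_infty.mp (ContDiff.const_smul (-u) t3s) i).contDiffAt,
          iteratedFDeriv_const_smul_apply' (contDiff_infty.mp hr i).contDiffAt,
          iteratedFDeriv_const_smul_apply' (contDiff_infty.mp t2s i).contDiffAt,
          iteratedFDeriv_const_smul_apply' (contDiff_infty.mp t3s i).contDiffAt,
          hrord i hb1, ord_conj hr hrord i hb1,
          mul_order (p := b) (q := b) hr t2s hrord (ord_conj hr hrord) i (by omega)]
        simp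
      have hWz : iteratedFDeriv ℝ i W 0 = 0 := by
        have ha1 : i < a := by omega
        have hterm : ∀ γ ∈ Finset.univ.erase (0 : Fin n → Fin lam),
            iteratedFDeriv ℝ i (fun w =>
              (-(u * Complex.exp (Complex.I * ((zdot ν' (Γf γ) : ℝ) : ℂ)))) •
                (mask n h w * conj (mask n h (w + Γf γ)))) 0 = 0 := by
          intro γ hγ
          have hγ0 : γ ≠ 0 := Finset.ne_of_mem_erase hγ
          have hΓne : Γf γ ≠ (0 : Fin n → ℝ) := by
            obtain ⟨i0, hi0⟩ := Function.ne_iff.mp hγ0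
            intro hcontra
            have hz := congrFun hcontra i0
            simp only [hΓf, Pi.zero_apply] at hz
            have : ((γ i0 : ℕ) : ℝ) = 0 := by
              field_simp [Real.pi_ne_zero, ne_of_gt hlamR] at hz
              rw [mul_zero] at hz
              rcases mul_eq_zero.mp hz with hq1 | hq1
              · exact absurd hq1 (ne_of_gt (by positivity))
              · exact hq1
            exact hi0 (by
              apply Fin.ext
              simpa using this)
          have hΓmem : Γf γ ∈ GammaSet n lam := ⟨γ, rfl⟩
          have htrans : ∀ i', i' < a →
              iteratedFDeriv ℝ i' (fun w => mask n h (w + Γf γ)) 0 = 0 := by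
            intro i' hi'
            rw [iteratedFDeriv_comp_add i' (mask n h) hτ (Γf γ) 0, zero_add]
            exact hacc (Γf γ) hΓmem hΓne i' hi'
          have hconjord := ord_conj (hτγ (Γf γ)) htrans
          rw [iteratedFDeriv_const_smul_apply'
              (contDiff_infty.mp (hτ.mul (contDiff_conj (hτγ (Γf γ)))) i).contDiffAt,
            mul_order (p := 0) (q := a) hτ (contDiff_conj (hτγ (Γf γ)))
              (fun iq hiq => absurd hiq (Nat.not_lt_zero iq)) hconjord i (by omega)]
          simp
        simp only [hW]
        rw [iteratedFDeriv_sum fun γ hγ =>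
          contDiff_infty.mp (ContDiff.const_smul _ (hτ.mul (contDiff_conj (hτγ (Γf γ))))) i]
        simp only [Finset.sum_apply]
        rw [Finset.sum_congr rfl hterm]
        simp
      rw [hAz, hWz, add_zero]
    intro j hj
    rw [show (fun ω => Complex.exp (Complex.I * ((zdot ν' ω : ℝ) : ℂ)) -
        mask n h ω * conj (polyphase n lam h ν' (fun i => (lam : ℝ) * ω i))) =
        fun w => Complex.exp (Complex.I * ((zdot ν' w : ℝ) : ℂ)) * Q w from funext hq2]
    exact mul_order (p := 0) (q := min a b) (contDiff_expI_zdot ν') hQs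
      (fun i hi => absurd hi (Nat.not_lt_zero i)) hQord j (by omega)
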